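/- Let A be a nonnegative weakly irreducible tensor of order m and dimension n, and let g be the girth of G_A. Then rho(A) = min over positive diagonal matrices X of (prod of the g largest slice sums of X^{-(m-1)} A X)^{1/g}, and rho(A) = max over positive diagonal matrices X of (prod of the g smallest slice sums of X^{-(m-1)} A X)^{1/g}. -/

import Mathlib

/-!
Perron–Frobenius: `A` has a positive eigenvector `v` whose eigenvalue `λ` is `ρ(A)`. It is the
limit, as `q ↓ m - 1`, of positive solutions of `A y^{m-1} = ν y^{[q]}`; these are fixed points of
a contraction in logarithmic coordinates, and strong connectivity keeps them in a compact set.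

For positive `x`, choose at each vertex `i` an out-neighbour `j` maximizing `v_j / x_j`; then
`λ (v_i/x_i)^{m-1} ≤ K_i (v_j/x_j)^{m-1}`. The chosen arcs define a self-map of the vertices which
permutes its periodic points; these contain a circuit, so there are at least `g` of them, and
around them the factors `(v/x)^{m-1}` telescope: the product of their `K_i` is at least
`λ` to the power of their number, so some `g` of them have product at least `λ^g`. Minimizing
instead gives the dual bound, and at `x = v` every `K_i` equals `λ`.
-/

open scoped BigOperators
open Finset

/-- The arc relation of the digraph `G_A` of an order-`m` dimension-`n` tensor `A`,
    whose entries are indexed by a head index and a tail of `m - 1` indices: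
    `(i, j)` is an arc when some entry `a_{i i_2 ... i_m} ≠ 0` has `j` among `i_2, ..., i_m`. -/
def tArc (m n : ℕ) (A : Fin n → (Fin (m - 1) → Fin n) → ℝ) (i j : Fin n) : Prop :=
  ∃ t : Fin (m - 1) → Fin n, A i t ≠ 0 ∧ j ∈ Set.range t

/-- A digraph (given by its arc relation) is strongly connected. -/
def StronglyConnected {n : ℕ} (arc : Fin n → Fin n → Prop) : Prop :=
  ∀ i j : Fin n, Relation.ReflTransGen arc i j

/-- `γ 0, γ 1, ..., γ p = γ 0` is a circuit (closed directed walk, loops allowed)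
    of length `p` in the digraph with arc relation `arc`. -/
def IsCircuit {n : ℕ} (arc : Fin n → Fin n → Prop) (p : ℕ) (γ : ℕ → Fin n) : Prop :=
  0 < p ∧ γ p = γ 0 ∧ ∀ j < p, arc (γ j) (γ (j + 1))

/-- `lam` is an eigenvalue of the order-`m` dimension-`n` real tensor `A`:
    there is a nonzero complex vector `x` with `A x^{m-1} = lam x^{[m-1]}`. -/
def IsEig (m n : ℕ) (A : Fin n → (Fin (m - 1) → Fin n) → ℝ) (lam : ℂ) : Prop :=
  ∃ x : Fin n → ℂ, x ≠ 0 ∧ ∀ i : Fin n,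
    ∑ t : Fin (m - 1) → Fin n, (A i t : ℂ) * ∏ j, x (t j) = lam * x i ^ (m - 1)

/-- The spectral radius of a tensor: the supremum of moduli of its eigenvalues. -/
noncomputable def specRad (m n : ℕ) (A : Fin n → (Fin (m - 1) → Fin n) → ℝ) : ℝ :=
  sSup {r : ℝ | ∃ lam : ℂ, IsEig m n A lam ∧ ‖lam‖ = r}

/-- The `i`-th slice sum `K_i = ∑_{i_2,...,i_m} a_{i i_2 ... i_m}`. -/
def sliceSum (m n : ℕ) (A : Fin n → (Fin (m - 1) → Fin n) → ℝ) (i : Fin n) : ℝ :=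
  ∑ t : Fin (m - 1) → Fin n, A i t

/-- `(A x^{m-1})_i = ∑_{i_2,...,i_m} a_{i i_2 ... i_m} x_{i_2} ⋯ x_{i_m}`. -/
def Ax (m n : ℕ) (A : Fin n → (Fin (m - 1) → Fin n) → ℝ) (x : Fin n → ℝ) (i : Fin n) : ℝ :=
  ∑ t : Fin (m - 1) → Fin n, A i t * ∏ j, x (t j)

section Products

variable {ι : Type*} {s : Finset ι} {K : ι → ℝ} {lam : ℝ}

theorem exists_erase_pow_le_prod [DecidableEq ι] (hlam : 0 < lam) (hK : ∀ i ∈ s, 0 ≤ K i)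
    (hs : s.Nonempty) (h : lam ^ s.card ≤ ∏ i ∈ s, K i) :
    ∃ a ∈ s, lam ^ (s.erase a).card ≤ ∏ i ∈ s.erase a, K i := by
  by_cases hsmall : ∃ a ∈ s, K a ≤ lam
  · obtain ⟨a, ha, hKa⟩ := hsmall
    refine ⟨a, ha, le_of_mul_le_mul_left ?_ hlam⟩
    calc lam * lam ^ (s.erase a).card = lam ^ s.card := by
          rw [← pow_succ', card_erase_add_one ha]
      _ ≤ ∏ i ∈ s, K i := h
      _ = K a * ∏ i ∈ s.erase a, K i := (mul_prod_erase s K ha).symm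
      _ ≤ lam * ∏ i ∈ s.erase a, K i :=
          mul_le_mul_of_nonneg_right hKa (prod_nonneg fun i hi => hK i (mem_of_mem_erase hi))
  · push Not at hsmall
    obtain ⟨a, ha⟩ := hs
    refine ⟨a, ha, ?_⟩
    rw [← prod_const]
    exact prod_le_prod (fun _ _ => hlam.le) fun i hi => (hsmall i (mem_of_mem_erase hi)).le

theorem exists_erase_prod_le_pow [DecidableEq ι] (hlam : 0 < lam) (hK : ∀ i ∈ s, 0 ≤ K i)
    (hs : s.Nonempty) (h : ∏ i ∈ s, K i ≤ lam ^ s.card) :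
    ∃ a ∈ s, ∏ i ∈ s.erase a, K i ≤ lam ^ (s.erase a).card := by
  by_cases hbig : ∃ a ∈ s, lam ≤ K a
  · obtain ⟨a, ha, hKa⟩ := hbig
    refine ⟨a, ha, le_of_mul_le_mul_left ?_ hlam⟩
    calc lam * ∏ i ∈ s.erase a, K i ≤ K a * ∏ i ∈ s.erase a, K i :=
          mul_le_mul_of_nonneg_right hKa (prod_nonneg fun i hi => hK i (mem_of_mem_erase hi))
      _ = ∏ i ∈ s, K i := mul_prod_erase s K ha
      _ ≤ lam ^ s.card := h
      _ = lam * lam ^ (s.erase a).card := by rw [← pow_succ', card_erase_add_one ha]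
  · push Not at hbig
    obtain ⟨a, ha⟩ := hs
    refine ⟨a, ha, ?_⟩
    rw [← prod_const]
    exact prod_le_prod (fun i hi => hK i (mem_of_mem_erase hi))
      fun i hi => (hbig i (mem_of_mem_erase hi)).le

theorem exists_subset_card_eq_pow_le_prod (hlam : 0 < lam) (hK : ∀ i ∈ s, 0 ≤ K i)
    (h : lam ^ s.card ≤ ∏ i ∈ s, K i) {k : ℕ} (hk : k ≤ s.card) :
    ∃ t ⊆ s, t.card = k ∧ lam ^ k ≤ ∏ i ∈ t, K i := by
  classical
  induction s using Finset.strongInduction with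
  | H s ih =>
    rcases hk.eq_or_lt with rfl | hlt
    · exact ⟨s, subset_rfl, rfl, h⟩
    obtain ⟨a, ha, h'⟩ := exists_erase_pow_le_prod hlam hK (card_pos.1 (by omega)) h
    obtain ⟨t, hts, htk, ht⟩ := ih (s.erase a) (erase_ssubset ha)
      (fun i hi => hK i (mem_of_mem_erase hi)) h' (by rw [card_erase_of_mem ha]; omega)
    exact ⟨t, hts.trans (erase_subset a s), htk, ht⟩

theorem exists_subset_card_eq_prod_le_pow (hlam : 0 < lam) (hK : ∀ i ∈ s, 0 ≤ K i)
    (h : ∏ i ∈ s, K i ≤ lam ^ s.card) {k : ℕ} (hk : k ≤ s.card) :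
    ∃ t ⊆ s, t.card = k ∧ ∏ i ∈ t, K i ≤ lam ^ k := by
  classical
  induction s using Finset.strongInduction with
  | H s ih =>
    rcases hk.eq_or_lt with rfl | hlt
    · exact ⟨s, subset_rfl, rfl, h⟩
    obtain ⟨a, ha, h'⟩ := exists_erase_prod_le_pow hlam hK (card_pos.1 (by omega)) h
    obtain ⟨t, hts, htk, ht⟩ := ih (s.erase a) (erase_ssubset ha)
      (fun i hi => hK i (mem_of_mem_erase hi)) h' (by rw [card_erase_of_mem ha]; omega)
    exact ⟨t, hts.trans (erase_subset a s), htk, ht⟩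

theorem prod_le_prod_of_bijOn_of_mul_le {u : Finset ι} {f : ι → ι} (hf : Set.BijOn f u u)
    {a b w : ι → ℝ} (ha : ∀ i ∈ u, 0 ≤ a i) (hw : ∀ i ∈ u, 0 < w i)
    (h : ∀ i ∈ u, a i * w i ≤ b i * w (f i)) : ∏ i ∈ u, a i ≤ ∏ i ∈ u, b i := by
  have hperm : ∏ i ∈ u, w (f i) = ∏ i ∈ u, w i :=
    prod_nbij f hf.mapsTo hf.injOn hf.surjOn fun _ _ => rfl
  have hprod := prod_le_prod (fun i hi => mul_nonneg (ha i hi) (hw i hi).le) h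
  rw [prod_mul_distrib, prod_mul_distrib, hperm] at hprod
  exact le_of_mul_le_mul_right hprod (prod_pos hw)

end Products

section Digraphs

variable {α : Type*} {r : α → α → Prop}

theorem exists_walk_of_reflTransGen {i j : α} (h : Relation.ReflTransGen r i j) :
    ∃ (ℓ : ℕ) (c : ℕ → α), c 0 = i ∧ c ℓ = j ∧ ∀ k < ℓ, r (c k) (c (k + 1)) := by
  induction h with
  | refl => exact ⟨0, fun _ => i, rfl, rfl, fun k hk => absurd hk k.not_lt_zero⟩
  | @tail b j _ hbj ih =>
    obtain ⟨ℓ, c, hc0, hcℓ, hc⟩ := ih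
    refine ⟨ℓ + 1, fun k => if k ≤ ℓ then c k else j, by simpa using hc0, by simp, ?_⟩
    intro k hk
    rcases Nat.lt_or_ge k ℓ with hkℓ | hkℓ
    · simpa [hkℓ.le, Nat.succ_le_of_lt hkℓ] using hc k hkℓ
    · obtain rfl : k = ℓ := by omega
      simpa [hcℓ] using hbj

theorem StronglyConnected.exists_walk_length_le {n : ℕ} {r : Fin n → Fin n → Prop}
    (h : StronglyConnected r) :
    ∃ L : ℕ, ∀ i j, ∃ ℓ ≤ L, ∃ c : ℕ → Fin n,
      c 0 = i ∧ c ℓ = j ∧ ∀ k < ℓ, r (c k) (c (k + 1)) := by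
  choose ℓ c hc0 hcℓ hc using fun p : Fin n × Fin n => exists_walk_of_reflTransGen (h p.1 p.2)
  exact ⟨univ.sup ℓ, fun i j =>
    ⟨ℓ (i, j), le_sup (mem_univ _), c (i, j), hc0 (i, j), hcℓ (i, j), hc (i, j)⟩⟩

theorem StronglyConnected.exists_arc {n : ℕ} {r : Fin n → Fin n → Prop} (h : StronglyConnected r)
    {i₀ j₀ : Fin n} (h₀ : r i₀ j₀) (i : Fin n) : ∃ j, r i j := by
  rcases (h i i₀).cases_head with rfl | ⟨j, hij, -⟩
  exacts [⟨j₀, h₀⟩, ⟨j, hij⟩]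

theorem le_pow_of_walk {s : α → ℝ} {C : ℝ} {d : ℕ} (hC : 1 ≤ C) (hd : 1 ≤ d)
    (hs0 : ∀ i, 0 ≤ s i) (hs : ∀ i j, r i j → s j ≤ C * s i ^ d) {c : ℕ → α} {ℓ : ℕ}
    (hc : ∀ k < ℓ, r (c k) (c (k + 1))) (hc0 : s (c 0) ≤ 1) : s (c ℓ) ≤ C ^ (ℓ * d ^ ℓ) := by
  induction ℓ with
  | zero => simpa using hc0
  | succ ℓ ih =>
    have hexp : 1 + ℓ * d ^ (ℓ + 1) ≤ (ℓ + 1) * d ^ (ℓ + 1) := by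
      nlinarith [Nat.one_le_pow (ℓ + 1) d hd]
    calc s (c (ℓ + 1)) ≤ C * s (c ℓ) ^ d := hs _ _ (hc ℓ ℓ.lt_succ_self)
      _ ≤ C * (C ^ (ℓ * d ^ ℓ)) ^ d := by
          gcongr
          · exact hs0 _
          · exact ih fun k hk => hc k (hk.trans ℓ.lt_succ_self)
      _ = C ^ (1 + ℓ * d ^ (ℓ + 1)) := by ring
      _ ≤ C ^ ((ℓ + 1) * d ^ (ℓ + 1)) := pow_le_pow_right₀ hC hexp

end Digraphs

section PeriodicPoints

open Function

theorem exists_mem_periodicPts {α : Type*} [Finite α] [Nonempty α] (f : α → α) :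
    ∃ y, y ∈ periodicPts f := by
  obtain ⟨a, b, hab, h⟩ :=
    Finite.exists_ne_map_eq_of_infinite fun k : ℕ => f^[k] (Classical.arbitrary α)
  wlog hlt : a < b generalizing a b
  · exact this b a hab.symm h.symm (by omega)
  refine ⟨f^[a] (Classical.arbitrary α), mk_mem_periodicPts (Nat.sub_pos_of_lt hlt) ?_⟩
  rw [IsPeriodicPt, IsFixedPt, ← iterate_add_apply, Nat.sub_add_cancel hlt.le]
  exact h.symm

theorem exists_bijOn_le_card {n : ℕ} [NeZero n] {r : Fin n → Fin n → Prop} {g : ℕ}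
    (hg : g ∈ lowerBounds {p : ℕ | ∃ γ : ℕ → Fin n, IsCircuit r p γ})
    {f : Fin n → Fin n} (hf : ∀ i, r i (f i)) :
    ∃ u : Finset (Fin n), Set.BijOn f u u ∧ g ≤ u.card := by
  classical
  obtain ⟨y, hy⟩ := exists_mem_periodicPts f
  let u := univ.filter (· ∈ periodicPts f)
  have hu : (u : Set (Fin n)) = periodicPts f := by ext; simp [u]
  refine ⟨u, hu ▸ bijOn_periodicPts f, ?_⟩
  have hcirc : IsCircuit r (minimalPeriod f y) (f^[·] y) :=
    ⟨minimalPeriod_pos_of_mem_periodicPts hy, iterate_minimalPeriod,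
      fun j _ => by simpa only [iterate_succ_apply'] using hf _⟩
  have horbit : (range (minimalPeriod f y)).image (f^[·] y) ⊆ u := by
    intro x hx
    obtain ⟨k, -, rfl⟩ := mem_image.1 hx
    simpa [u] using (bijOn_periodicPts f).mapsTo.iterate k hy
  calc g ≤ minimalPeriod f y := hg ⟨_, hcirc⟩
    _ = ((range (minimalPeriod f y)).image (f^[·] y)).card := by
        rw [card_image_of_injOn (by simpa using iterate_injOn_Iio_minimalPeriod), card_range]
    _ ≤ u.card := card_le_card horbit

end PeriodicPoints

section Tensors

variable {m n : ℕ} {A : Fin n → (Fin (m - 1) → Fin n) → ℝ}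

theorem Ax_nonneg (hA : ∀ i t, 0 ≤ A i t) {x : Fin n → ℝ} (hx : ∀ j, 0 ≤ x j) (i : Fin n) :
    0 ≤ Ax m n A x i :=
  sum_nonneg fun t _ => mul_nonneg (hA i t) (prod_nonneg fun _ _ => hx _)

theorem Ax_pos (hA : ∀ i t, 0 ≤ A i t) {i : Fin n} (hi : ∃ j, tArc m n A i j)
    {x : Fin n → ℝ} (hx : ∀ j, 0 < x j) : 0 < Ax m n A x i := by
  obtain ⟨-, t, ht, -⟩ := hi
  exact sum_pos' (fun t _ => mul_nonneg (hA i t) (prod_nonneg fun _ _ => (hx _).le))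
    ⟨t, mem_univ _, mul_pos ((hA i t).lt_of_ne' ht) (prod_pos fun _ _ => hx _)⟩

theorem Ax_const_mul (c : ℝ) (x : Fin n → ℝ) (i : Fin n) :
    Ax m n A (fun j => c * x j) i = c ^ (m - 1) * Ax m n A x i := by
  simp only [Ax, prod_mul_distrib, prod_const, card_univ, Fintype.card_fin, mul_sum]
  exact sum_congr rfl fun _ _ => by ring

theorem continuous_Ax (i : Fin n) : Continuous fun x => Ax m n A x i := by
  unfold Ax
  fun_prop

theorem Ax_le_pow_mul_Ax (hA : ∀ i t, 0 ≤ A i t) {x y : Fin n → ℝ} {c : ℝ} {i : Fin n}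
    (hy : ∀ j, 0 ≤ y j) (h : ∀ j, tArc m n A i j → y j ≤ c * x j) :
    Ax m n A y i ≤ c ^ (m - 1) * Ax m n A x i := by
  rw [Ax, Ax, mul_sum]
  refine sum_le_sum fun t _ => ?_
  by_cases ht : A i t = 0
  · simp [ht]
  calc A i t * ∏ k, y (t k) ≤ A i t * ∏ k, (c * x (t k)) :=
        mul_le_mul_of_nonneg_left
          (prod_le_prod (fun _ _ => hy _) fun k _ => h _ ⟨t, ht, k, rfl⟩) (hA i t)
    _ = c ^ (m - 1) * (A i t * ∏ k, x (t k)) := by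
        rw [prod_mul_distrib, prod_const, card_univ, Fintype.card_fin]
        ring

theorem exists_tArc_Ax_le (hA : ∀ i t, 0 ≤ A i t) {x y : Fin n → ℝ} (hx : ∀ j, 0 < x j)
    (hy : ∀ j, 0 ≤ y j) {i : Fin n} (hi : ∃ j, tArc m n A i j) :
    ∃ j, tArc m n A i j ∧ Ax m n A y i ≤ (y j / x j) ^ (m - 1) * Ax m n A x i := by
  classical
  obtain ⟨j, hj, hmax⟩ := exists_max_image (univ.filter (tArc m n A i)) (fun j => y j / x j)
    (by simpa [filter_nonempty_iff] using hi)
  refine ⟨j, (mem_filter.1 hj).2, Ax_le_pow_mul_Ax hA hy fun k hk => ?_⟩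
  exact (div_le_iff₀ (hx k)).1 (hmax k (mem_filter.2 ⟨mem_univ _, hk⟩))

end Tensors

section SpectralRadius

variable {m n : ℕ} {A : Fin n → (Fin (m - 1) → Fin n) → ℝ} {v : Fin n → ℝ} {lam : ℝ}

theorem isEig_of_pos [NeZero n] (hv : ∀ i, 0 < v i)
    (heig : ∀ i, Ax m n A v i = lam * v i ^ (m - 1)) : IsEig m n A lam := by
  refine ⟨fun i => (v i : ℂ), fun h => (hv 0).ne' (Complex.ofReal_eq_zero.1 (congrFun h 0)),
    fun i => ?_⟩
  have := congrArg (fun r : ℝ => (r : ℂ)) (heig i)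
  push_cast [Ax] at this
  exact this

theorem norm_le_of_isEig (hA : ∀ i t, 0 ≤ A i t) (hv : ∀ i, 0 < v i)
    (heig : ∀ i, Ax m n A v i = lam * v i ^ (m - 1)) {μ : ℂ} (hμ : IsEig m n A μ) :
    ‖μ‖ ≤ lam := by
  obtain ⟨z, hz0, hz⟩ := hμ
  obtain ⟨i₀, hi₀⟩ := Function.ne_iff.1 hz0
  obtain ⟨i, -, hi⟩ := exists_max_image univ (fun j => ‖z j‖ / v j) ⟨i₀, mem_univ _⟩
  set c := ‖z i‖ / v i
  have hzc : ∀ j, ‖z j‖ ≤ c * v j := fun j => (div_le_iff₀ (hv j)).1 (hi j (mem_univ j))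
  have hzi : ‖z i‖ = c * v i := (div_mul_cancel₀ _ (hv i).ne').symm
  have hzi_pos : 0 < ‖z i‖ :=
    hzi ▸ mul_pos ((div_pos (norm_pos_iff.2 hi₀) (hv i₀)).trans_le (hi i₀ (mem_univ _))) (hv i)
  have key : ‖μ‖ * ‖z i‖ ^ (m - 1) ≤ lam * ‖z i‖ ^ (m - 1) :=
    calc ‖μ‖ * ‖z i‖ ^ (m - 1) = ‖∑ t, (A i t : ℂ) * ∏ k, z (t k)‖ := by
          rw [hz i, norm_mul, norm_pow]
      _ ≤ Ax m n A (fun j => ‖z j‖) i := by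
          refine (norm_sum_le _ _).trans_eq (sum_congr rfl fun t _ => ?_)
          rw [norm_mul, Complex.norm_of_nonneg (hA i t), norm_prod]
      _ ≤ c ^ (m - 1) * Ax m n A v i :=
          Ax_le_pow_mul_Ax hA (fun _ => norm_nonneg _) fun j _ => hzc j
      _ = lam * ‖z i‖ ^ (m - 1) := by rw [heig, hzi, mul_pow]; ring
  exact le_of_mul_le_mul_right key (pow_pos hzi_pos _)

theorem specRad_eq [NeZero n] (hA : ∀ i t, 0 ≤ A i t) (hv : ∀ i, 0 < v i) (hlam : 0 ≤ lam)
    (heig : ∀ i, Ax m n A v i = lam * v i ^ (m - 1)) : specRad m n A = lam :=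
  IsGreatest.csSup_eq ⟨⟨lam, isEig_of_pos hv heig, by simp [abs_of_nonneg hlam]⟩,
    by rintro r ⟨μ, hμ, rfl⟩; exact norm_le_of_isEig hA hv heig hμ⟩

end SpectralRadius

theorem exists_pos_le_of_pos {ι : Type*} [Fintype ι] (f : ι → ℝ) :
    ∃ a > 0, ∀ i, 0 < f i → a ≤ f i := by
  classical
  rcases (univ.filter fun i => 0 < f i).eq_empty_or_nonempty with h | h
  · exact ⟨1, one_pos, fun i hi => absurd hi (filter_eq_empty_iff.1 h (mem_univ i))⟩
  · obtain ⟨i₀, hi₀, hmin⟩ := exists_min_image _ f h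
    exact ⟨f i₀, (mem_filter.1 hi₀).2, fun i hi => hmin i (mem_filter.2 ⟨mem_univ _, hi⟩)⟩

section Perron

open Real Filter Topology

variable {m n : ℕ} {A : Fin n → (Fin (m - 1) → Fin n) → ℝ}

theorem Ax_le_sliceSum (hA : ∀ i t, 0 ≤ A i t) {y : Fin n → ℝ} (hy0 : ∀ j, 0 ≤ y j)
    (hy1 : ∀ j, y j ≤ 1) (i : Fin n) : Ax m n A y i ≤ sliceSum m n A i := by
  have h := Ax_le_pow_mul_Ax (c := 1) (x := fun _ => 1) (i := i) hA hy0 fun j _ => by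
    simpa using hy1 j
  simpa [Ax, sliceSum] using h

/-- For `q > m - 1` the map `z ↦ q⁻¹ log (A (exp z)^{m-1})` is a contraction in the sup metric;
its fixed point `z` gives the solution `y = exp z`. -/
theorem exists_Ax_eq_rpow (hA : ∀ i t, 0 ≤ A i t) (hrow : ∀ i, ∃ j, tArc m n A i j) {q : ℝ}
    (hq : ((m - 1 : ℕ) : ℝ) < q) :
    ∃ y : Fin n → ℝ, (∀ i, 0 < y i) ∧ ∀ i, Ax m n A y i = y i ^ q := by
  set d : ℝ := ((m - 1 : ℕ) : ℝ)
  have hd : 0 ≤ d := Nat.cast_nonneg _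
  have hq0 : 0 < q := hd.trans_lt hq
  have hpos : ∀ z : Fin n → ℝ, ∀ i, 0 < Ax m n A (fun j => exp (z j)) i :=
    fun z i => Ax_pos hA (hrow i) fun _ => exp_pos _
  let T : (Fin n → ℝ) → Fin n → ℝ := fun z i => q⁻¹ * log (Ax m n A (fun j => exp (z j)) i)
  have hT : ∀ z z' i, T z i - T z' i ≤ d / q * dist z z' := by
    intro z z' i
    have hle : Ax m n A (fun j => exp (z j)) i
        ≤ exp (dist z z') ^ (m - 1) * Ax m n A (fun j => exp (z' j)) i := by
      refine Ax_le_pow_mul_Ax hA (fun _ => (exp_pos _).le) fun j _ => ?_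
      rw [← exp_add, exp_le_exp]
      have := (le_abs_self _).trans ((Real.dist_eq _ _).symm.trans_le (dist_le_pi_dist z z' j))
      linarith
    have hlog := log_le_log (hpos z i) hle
    rw [log_mul (pow_pos (exp_pos _) _).ne' (hpos z' i).ne', log_pow, log_exp] at hlog
    calc T z i - T z' i
        = q⁻¹ * (log (Ax m n A (fun j => exp (z j)) i)
            - log (Ax m n A (fun j => exp (z' j)) i)) := by ring
      _ ≤ q⁻¹ * (d * dist z z') := by gcongr; linarith
      _ = d / q * dist z z' := by ring
  have hcontr : ContractingWith ⟨d / q, div_nonneg hd hq0.le⟩ T := by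
    refine ⟨(div_lt_one hq0).2 hq, LipschitzWith.of_dist_le_mul fun z z' => ?_⟩
    refine (dist_pi_le_iff (mul_nonneg (div_nonneg hd hq0.le) dist_nonneg)).2 fun i => ?_
    rw [Real.dist_eq, abs_le]
    have := hT z' z i
    rw [dist_comm] at this
    exact ⟨by linarith, hT z z' i⟩
  obtain ⟨z, hz, -⟩ := hcontr.exists_fixedPoint 0 (edist_ne_top _ _)
  refine ⟨fun j => exp (z j), fun _ => exp_pos _, fun i => ?_⟩
  have hzi : q⁻¹ * log (Ax m n A (fun j => exp (z j)) i) = z i := congrFun hz i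
  rw [← exp_mul, ← hzi, mul_comm, ← mul_assoc, mul_inv_cancel₀ hq0.ne', one_mul,
    exp_log (hpos z i)]

theorem exists_normalized_Ax_eq_mul_rpow [NeZero n] (hA : ∀ i t, 0 ≤ A i t)
    (hrow : ∀ i, ∃ j, tArc m n A i j) {q : ℝ} (hq : ((m - 1 : ℕ) : ℝ) < q) :
    ∃ (y : Fin n → ℝ) (ν : ℝ), (∀ i, 0 < y i ∧ y i ≤ 1) ∧ (∃ i, y i = 1) ∧
      ∀ i, Ax m n A y i = ν * y i ^ q := by
  obtain ⟨y, hy, hyq⟩ := exists_Ax_eq_rpow hA hrow hq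
  obtain ⟨imax, -, hmax⟩ := exists_max_image univ y univ_nonempty
  set c := (y imax)⁻¹
  have hc : 0 < c := inv_pos.2 (hy imax)
  refine ⟨fun j => c * y j, c ^ (((m - 1 : ℕ) : ℝ) - q),
    fun i => ⟨mul_pos hc (hy i), ?_⟩, ⟨imax, inv_mul_cancel₀ (hy imax).ne'⟩, fun i => ?_⟩
  · exact (inv_mul_le_one₀ (hy imax)).2 (hmax i (mem_univ i))
  · rw [Ax_const_mul, hyq, mul_rpow hc.le (hy i).le, ← mul_assoc, ← rpow_add hc,
      sub_add_cancel, rpow_natCast]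

theorem div_le_mul_pow_of_tArc (hA : ∀ i t, 0 ≤ A i t) {a K μ : ℝ}
    (haA : ∀ i t, 0 < A i t → a ≤ A i t) (ha : 0 < a) {y : Fin n → ℝ} (hμ : 0 < μ)
    (hyμ : ∀ j, μ ≤ y j) (hK : ∀ i, Ax m n A y i ≤ K * y i ^ (m - 1)) {i j : Fin n}
    (hij : tArc m n A i j) : y j / μ ≤ K / a * (y i / μ) ^ (m - 1) := by
  obtain ⟨t, ht, k, rfl⟩ := hij
  have hy : ∀ j, 0 ≤ y j := fun j => hμ.le.trans (hyμ j)
  have hprod : y (t k) * μ ^ (m - 1 - 1) ≤ ∏ l, y (t l) := by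
    rw [← mul_prod_erase univ _ (mem_univ k)]
    refine mul_le_mul_of_nonneg_left ?_ (hy _)
    calc μ ^ (m - 1 - 1) = ∏ _l ∈ univ.erase k, μ := by simp [card_erase_of_mem]
      _ ≤ ∏ l ∈ univ.erase k, y (t l) := prod_le_prod (fun _ _ => hμ.le) fun l _ => hyμ _
  have hAy : a * (y (t k) * μ ^ (m - 1 - 1)) ≤ K * y i ^ (m - 1) :=
    calc a * (y (t k) * μ ^ (m - 1 - 1)) ≤ A i t * ∏ l, y (t l) :=
          mul_le_mul (haA i t ((hA i t).lt_of_ne' ht)) hprod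
            (mul_nonneg (hy _) (pow_nonneg hμ.le _)) (hA i t)
      _ ≤ Ax m n A y i :=
          single_le_sum (f := fun t => A i t * ∏ l, y (t l))
            (fun t _ => mul_nonneg (hA i t) (prod_nonneg fun _ _ => hy _)) (mem_univ t)
      _ ≤ K * y i ^ (m - 1) := hK i
  have hμd : μ ^ (m - 1) = μ * μ ^ (m - 1 - 1) := by
    rw [← pow_succ']
    congr 1
    have := k.pos
    omega
  calc y (t k) / μ = a * (y (t k) * μ ^ (m - 1 - 1)) / (a * μ ^ (m - 1)) := by
        rw [hμd]; field_simp
    _ ≤ K * y i ^ (m - 1) / (a * μ ^ (m - 1)) := by gcongr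
    _ = K / a * (y i / μ) ^ (m - 1) := by rw [div_pow]; field_simp

/-- A Harnack inequality: by `div_le_mul_pow_of_tArc`, `y / min y` grows in a controlled way
along a walk from the minimum of `y` to its maximum. -/
theorem exists_pos_forall_le_of_Ax_le (hA : ∀ i t, 0 ≤ A i t)
    (hirr : StronglyConnected (tArc m n A)) (hd : 1 ≤ m - 1) (K : ℝ) :
    ∃ c > 0, ∀ y : Fin n → ℝ, (∀ i, 0 < y i ∧ y i ≤ 1) → (∃ i, y i = 1) →
      (∀ i, Ax m n A y i ≤ K * y i ^ (m - 1)) → ∀ i, c ≤ y i := by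
  obtain ⟨a, ha, haA⟩ := exists_pos_le_of_pos fun p : Fin n × (Fin (m - 1) → Fin n) => A p.1 p.2
  obtain ⟨L, hL⟩ := hirr.exists_walk_length_le
  set C := max 1 (K / a)
  refine ⟨(C ^ (L * (m - 1) ^ L))⁻¹, by positivity, fun y hy ⟨imax, hmax⟩ hK => ?_⟩
  obtain ⟨imin, -, hmin⟩ := exists_min_image univ y ⟨imax, mem_univ _⟩
  set μ := y imin
  have hμ : 0 < μ := (hy imin).1
  have harc : ∀ i j, tArc m n A i j → y j / μ ≤ C * (y i / μ) ^ (m - 1) := fun i j hij =>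
    (div_le_mul_pow_of_tArc hA (fun i t => haA (i, t)) ha hμ (fun j => hmin j (mem_univ j)) hK
      hij).trans <|
      mul_le_mul_of_nonneg_right (le_max_right _ _) (pow_nonneg (div_nonneg (hy i).1.le hμ.le) _)
  obtain ⟨ℓ, hℓ, w, hw0, hwℓ, hw⟩ := hL imin imax
  have hgrowth := le_pow_of_walk (s := fun j => y j / μ) (le_max_left _ _) hd
    (fun j => div_nonneg (hy j).1.le hμ.le) harc hw (by simp [hw0, μ, hμ.ne'])
  simp only [hwℓ, hmax, one_div] at hgrowth
  intro i
  calc (C ^ (L * (m - 1) ^ L))⁻¹ ≤ (C ^ (ℓ * (m - 1) ^ ℓ))⁻¹ := by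
        gcongr
        exact le_max_left _ _
    _ ≤ μ := inv_le_of_inv_le₀ hμ hgrowth
    _ ≤ y i := hmin i (mem_univ i)

theorem exists_bounded_Ax_eq_mul_rpow [NeZero n] (hm : 2 ≤ m) (hA : ∀ i t, 0 ≤ A i t)
    (hirr : StronglyConnected (tArc m n A)) (hrow : ∀ i, ∃ j, tArc m n A i j) :
    ∃ c > 0, ∃ K : ℝ, ∀ q : ℝ, ((m - 1 : ℕ) : ℝ) < q → ∃ (y : Fin n → ℝ) (ν : ℝ),
      (∀ i, y i ∈ Set.Icc c 1) ∧ ν ∈ Set.Icc 0 K ∧ ∀ i, Ax m n A y i = ν * y i ^ q := by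
  obtain ⟨K, hK⟩ : ∃ K, ∀ i, sliceSum m n A i ≤ K :=
    let ⟨K, hK⟩ := (Set.finite_range (sliceSum m n A)).bddAbove
    ⟨K, fun i => hK ⟨i, rfl⟩⟩
  obtain ⟨c, hc, hlow⟩ := exists_pos_forall_le_of_Ax_le hA hirr (by omega) K
  refine ⟨c, hc, K, fun q hq => ?_⟩
  obtain ⟨y, ν, hy, ⟨imax, hmax⟩, hyν⟩ := exists_normalized_Ax_eq_mul_rpow hA hrow hq
  have hν : ν = Ax m n A y imax := by rw [hyν, hmax, one_rpow, mul_one]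
  have hν0 : 0 ≤ ν := hν ▸ Ax_nonneg hA (fun j => (hy j).1.le) imax
  have hνK : ν ≤ K :=
    hν ▸ (Ax_le_sliceSum hA (fun j => (hy j).1.le) (fun j => (hy j).2) imax).trans (hK imax)
  have hyK : ∀ i, Ax m n A y i ≤ K * y i ^ (m - 1) := fun i =>
    calc Ax m n A y i = ν * y i ^ q := hyν i
      _ ≤ ν * y i ^ ((m - 1 : ℕ) : ℝ) :=
          mul_le_mul_of_nonneg_left (rpow_le_rpow_of_exponent_ge (hy i).1 (hy i).2 hq.le) hν0
      _ ≤ K * y i ^ (m - 1) := by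
          rw [rpow_natCast]
          exact mul_le_mul_of_nonneg_right hνK (pow_nonneg (hy i).1.le _)
  exact ⟨y, ν, fun i => ⟨hlow y hy ⟨imax, hmax⟩ hyK i, (hy i).2⟩, ⟨hν0, hνK⟩, hyν⟩

theorem exists_pos_eigenvector [NeZero n] (hm : 2 ≤ m) (hA : ∀ i t, 0 ≤ A i t)
    (hirr : StronglyConnected (tArc m n A)) (hrow : ∀ i, ∃ j, tArc m n A i j) :
    ∃ (v : Fin n → ℝ) (lam : ℝ), (∀ i, 0 < v i) ∧ 0 < lam ∧
      ∀ i, Ax m n A v i = lam * v i ^ (m - 1) := by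
  set d : ℝ := ((m - 1 : ℕ) : ℝ)
  obtain ⟨c, hc, K, happrox⟩ := exists_bounded_Ax_eq_mul_rpow hm hA hirr hrow
  choose y ν hy hν hyν using fun k : ℕ =>
    happrox (d + 1 / ((k : ℝ) + 1)) (lt_add_of_pos_right d (by positivity))
  obtain ⟨⟨v, lam⟩, ⟨hv, -⟩, φ, hφ, hlim⟩ :=
    ((isCompact_univ_pi fun _ => isCompact_Icc).prod isCompact_Icc).tendsto_subseq
      (x := fun k => (y k, ν k)) fun k => ⟨fun i _ => hy k i, hν k⟩
  have hvpos : ∀ i, 0 < v i := fun i => hc.trans_le (hv i trivial).1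
  have hy_lim : Tendsto (fun k => y (φ k)) atTop (𝓝 v) := (continuous_fst.tendsto _).comp hlim
  have hν_lim : Tendsto (fun k => ν (φ k)) atTop (𝓝 lam) := (continuous_snd.tendsto _).comp hlim
  have hq_lim : Tendsto (fun k => d + 1 / ((φ k : ℝ) + 1)) atTop (𝓝 d) := by
    simpa using (tendsto_one_div_add_atTop_nhds_zero_nat.comp hφ.tendsto_atTop).const_add d
  have heig : ∀ i, Ax m n A v i = lam * v i ^ (m - 1) := by
    intro i
    have h₁ := ((continuous_Ax (m := m) (A := A) i).tendsto v).comp hy_lim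
    have h₂ : Tendsto (fun k => Ax m n A (y (φ k)) i) atTop (𝓝 (lam * v i ^ d)) := by
      simp_rw [hyν]
      exact hν_lim.mul ((tendsto_pi_nhds.1 hy_lim i).rpow hq_lim (Or.inl (hvpos i).ne'))
    rw [tendsto_nhds_unique h₁ h₂, rpow_natCast]
  have hAv := Ax_pos hA (hrow 0) hvpos
  rw [heig] at hAv
  exact ⟨v, lam, hvpos, pos_of_mul_pos_left hAv (pow_nonneg (hvpos 0).le _), heig⟩

end Perron

section CollatzWielandt

open Real

variable {m n : ℕ} {A : Fin n → (Fin (m - 1) → Fin n) → ℝ} {v : Fin n → ℝ} {lam : ℝ}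

/-- The `i`-th slice sum `K_i` of `X^{-(m-1)} A X` for `X = diag x`. -/
noncomputable def scaledSliceSum (m n : ℕ) (A : Fin n → (Fin (m - 1) → Fin n) → ℝ) (x : Fin n → ℝ)
    (i : Fin n) : ℝ :=
  Ax m n A x i / x i ^ (m - 1)

def sliceProducts (m n : ℕ) (A : Fin n → (Fin (m - 1) → Fin n) → ℝ) (g : ℕ)
    (x : Fin n → ℝ) : Set ℝ :=
  {s | ∃ u : Finset (Fin n), u.card = g ∧ s = ∏ i ∈ u, scaledSliceSum m n A x i}

theorem scaledSliceSum_nonneg (hA : ∀ i t, 0 ≤ A i t) {x : Fin n → ℝ} (hx : ∀ i, 0 < x i)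
    (i : Fin n) : 0 ≤ scaledSliceSum m n A x i :=
  div_nonneg (Ax_nonneg hA (fun j => (hx j).le) i) (pow_nonneg (hx i).le _)

theorem scaledSliceSum_eq_of_eigen (hv : ∀ i, 0 < v i)
    (heig : ∀ i, Ax m n A v i = lam * v i ^ (m - 1)) (i : Fin n) :
    scaledSliceSum m n A v i = lam := by
  rw [scaledSliceSum, heig, mul_div_cancel_right₀ _ (pow_pos (hv i) _).ne']

theorem exists_tArc_mul_le_scaledSliceSum (hA : ∀ i t, 0 ≤ A i t) (hv : ∀ i, 0 < v i)
    (heig : ∀ i, Ax m n A v i = lam * v i ^ (m - 1)) {x : Fin n → ℝ} (hx : ∀ i, 0 < x i)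
    {i : Fin n} (hi : ∃ j, tArc m n A i j) :
    ∃ j, tArc m n A i j ∧
      lam * (v i / x i) ^ (m - 1) ≤ scaledSliceSum m n A x i * (v j / x j) ^ (m - 1) := by
  obtain ⟨j, hj, hle⟩ := exists_tArc_Ax_le hA hx (fun j => (hv j).le) hi
  refine ⟨j, hj, ?_⟩
  calc lam * (v i / x i) ^ (m - 1) = Ax m n A v i / x i ^ (m - 1) := by
        rw [heig, div_pow, mul_div_assoc]
    _ ≤ (v j / x j) ^ (m - 1) * Ax m n A x i / x i ^ (m - 1) :=
        div_le_div_of_nonneg_right hle (pow_nonneg (hx i).le _)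
    _ = scaledSliceSum m n A x i * (v j / x j) ^ (m - 1) := by
        rw [scaledSliceSum]; ring

theorem exists_tArc_scaledSliceSum_mul_le (hA : ∀ i t, 0 ≤ A i t) (hv : ∀ i, 0 < v i)
    (heig : ∀ i, Ax m n A v i = lam * v i ^ (m - 1)) {x : Fin n → ℝ} (hx : ∀ i, 0 < x i)
    {i : Fin n} (hi : ∃ j, tArc m n A i j) :
    ∃ j, tArc m n A i j ∧
      scaledSliceSum m n A x i * (x i / v i) ^ (m - 1) ≤ lam * (x j / v j) ^ (m - 1) := by
  obtain ⟨j, hj, hle⟩ := exists_tArc_Ax_le hA hv (fun j => (hx j).le) hi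
  refine ⟨j, hj, ?_⟩
  have hxi := (pow_pos (hx i) (m - 1)).ne'
  have hvi := (pow_pos (hv i) (m - 1)).ne'
  calc scaledSliceSum m n A x i * (x i / v i) ^ (m - 1) = Ax m n A x i / v i ^ (m - 1) := by
        rw [scaledSliceSum, div_pow]; field_simp
    _ ≤ (x j / v j) ^ (m - 1) * Ax m n A v i / v i ^ (m - 1) :=
        div_le_div_of_nonneg_right hle (pow_nonneg (hv i).le _)
    _ = lam * (x j / v j) ^ (m - 1) := by rw [heig]; field_simp

theorem exists_card_eq_pow_le_prod (hA : ∀ i t, 0 ≤ A i t) (hrow : ∀ i, ∃ j, tArc m n A i j)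
    [NeZero n] {g : ℕ} (hg : g ∈ lowerBounds {p : ℕ | ∃ γ, IsCircuit (tArc m n A) p γ})
    (hv : ∀ i, 0 < v i) (hlam : 0 < lam) (heig : ∀ i, Ax m n A v i = lam * v i ^ (m - 1))
    {x : Fin n → ℝ} (hx : ∀ i, 0 < x i) :
    ∃ s : Finset (Fin n), s.card = g ∧ lam ^ g ≤ ∏ i ∈ s, scaledSliceSum m n A x i := by
  choose f hf hle using fun i => exists_tArc_mul_le_scaledSliceSum hA hv heig hx (hrow i)
  obtain ⟨u, hu, hgu⟩ := exists_bijOn_le_card hg hf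
  have hcycle : lam ^ u.card ≤ ∏ i ∈ u, scaledSliceSum m n A x i := by
    rw [← prod_const]
    exact prod_le_prod_of_bijOn_of_mul_le hu (fun _ _ => hlam.le)
      (fun i _ => pow_pos (div_pos (hv i) (hx i)) _) fun i _ => hle i
  obtain ⟨s, -, hs, hprod⟩ := exists_subset_card_eq_pow_le_prod hlam
    (fun i _ => scaledSliceSum_nonneg hA hx i) hcycle hgu
  exact ⟨s, hs, hprod⟩

theorem exists_card_eq_prod_le_pow (hA : ∀ i t, 0 ≤ A i t) (hrow : ∀ i, ∃ j, tArc m n A i j)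
    [NeZero n] {g : ℕ} (hg : g ∈ lowerBounds {p : ℕ | ∃ γ, IsCircuit (tArc m n A) p γ})
    (hv : ∀ i, 0 < v i) (hlam : 0 < lam) (heig : ∀ i, Ax m n A v i = lam * v i ^ (m - 1))
    {x : Fin n → ℝ} (hx : ∀ i, 0 < x i) :
    ∃ s : Finset (Fin n), s.card = g ∧ ∏ i ∈ s, scaledSliceSum m n A x i ≤ lam ^ g := by
  choose f hf hle using fun i => exists_tArc_scaledSliceSum_mul_le hA hv heig hx (hrow i)
  obtain ⟨u, hu, hgu⟩ := exists_bijOn_le_card hg hf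
  have hcycle : ∏ i ∈ u, scaledSliceSum m n A x i ≤ lam ^ u.card := by
    rw [← prod_const]
    exact prod_le_prod_of_bijOn_of_mul_le hu (fun i _ => scaledSliceSum_nonneg hA hx i)
      (fun i _ => pow_pos (div_pos (hx i) (hv i)) _) fun i _ => hle i
  obtain ⟨s, -, hs, hprod⟩ := exists_subset_card_eq_prod_le_pow hlam
    (fun i _ => scaledSliceSum_nonneg hA hx i) hcycle hgu
  exact ⟨s, hs, hprod⟩

theorem sliceProducts_finite (g : ℕ) (x : Fin n → ℝ) : (sliceProducts m n A g x).Finite :=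
  (Set.finite_range fun u : Finset (Fin n) => ∏ i ∈ u, scaledSliceSum m n A x i).subset
    fun _ ⟨u, _, hu⟩ => ⟨u, hu.symm⟩

theorem sliceProducts_eq_singleton_of_eigen (hv : ∀ i, 0 < v i)
    (heig : ∀ i, Ax m n A v i = lam * v i ^ (m - 1)) {g : ℕ}
    (hg : ∃ s : Finset (Fin n), s.card = g) : sliceProducts m n A g v = {lam ^ g} := by
  have hprod : ∀ u : Finset (Fin n), u.card = g → ∏ i ∈ u, scaledSliceSum m n A v i = lam ^ g :=
    fun u hu => by simp [scaledSliceSum_eq_of_eigen hv heig, hu]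
  obtain ⟨s, hs⟩ := hg
  ext r
  exact ⟨fun ⟨u, hu, hr⟩ => hr.trans (hprod u hu), fun hr => ⟨s, hs, hr.trans (hprod s hs).symm⟩⟩

theorem isLeast_rpow_sSup_sliceProducts (hA : ∀ i t, 0 ≤ A i t)
    (hrow : ∀ i, ∃ j, tArc m n A i j) [NeZero n] {g : ℕ} (hg0 : 0 < g)
    (hg : g ∈ lowerBounds {p : ℕ | ∃ γ, IsCircuit (tArc m n A) p γ})
    (hv : ∀ i, 0 < v i) (hlam : 0 < lam) (heig : ∀ i, Ax m n A v i = lam * v i ^ (m - 1)) :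
    IsLeast {r | ∃ x : Fin n → ℝ, (∀ i, 0 < x i) ∧
      r = sSup (sliceProducts m n A g x) ^ ((g : ℝ)⁻¹)} lam := by
  obtain ⟨s, hs, -⟩ := exists_card_eq_pow_le_prod hA hrow hg hv hlam heig hv
  refine ⟨⟨v, hv, ?_⟩, ?_⟩
  · rw [sliceProducts_eq_singleton_of_eigen hv heig ⟨s, hs⟩, csSup_singleton,
      pow_rpow_inv_natCast hlam.le hg0.ne']
  rintro r ⟨x, hx, rfl⟩
  obtain ⟨s, hs, hprod⟩ := exists_card_eq_pow_le_prod hA hrow hg hv hlam heig hx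
  calc lam = (lam ^ g) ^ ((g : ℝ)⁻¹) := (pow_rpow_inv_natCast hlam.le hg0.ne').symm
    _ ≤ sSup (sliceProducts m n A g x) ^ ((g : ℝ)⁻¹) :=
        rpow_le_rpow (by positivity)
          (hprod.trans (le_csSup (sliceProducts_finite g x).bddAbove ⟨s, hs, rfl⟩))
          (by positivity)

theorem isGreatest_rpow_sInf_sliceProducts (hA : ∀ i t, 0 ≤ A i t)
    (hrow : ∀ i, ∃ j, tArc m n A i j) [NeZero n] {g : ℕ} (hg0 : 0 < g)
    (hg : g ∈ lowerBounds {p : ℕ | ∃ γ, IsCircuit (tArc m n A) p γ})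
    (hv : ∀ i, 0 < v i) (hlam : 0 < lam) (heig : ∀ i, Ax m n A v i = lam * v i ^ (m - 1)) :
    IsGreatest {r | ∃ x : Fin n → ℝ, (∀ i, 0 < x i) ∧
      r = sInf (sliceProducts m n A g x) ^ ((g : ℝ)⁻¹)} lam := by
  obtain ⟨s, hs, -⟩ := exists_card_eq_prod_le_pow hA hrow hg hv hlam heig hv
  refine ⟨⟨v, hv, ?_⟩, ?_⟩
  · rw [sliceProducts_eq_singleton_of_eigen hv heig ⟨s, hs⟩, csInf_singleton,
      pow_rpow_inv_natCast hlam.le hg0.ne']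
  rintro r ⟨x, hx, rfl⟩
  obtain ⟨s, hs, hprod⟩ := exists_card_eq_prod_le_pow hA hrow hg hv hlam heig hx
  have hInf : 0 ≤ sInf (sliceProducts m n A g x) :=
    Real.sInf_nonneg fun _ ⟨u, _, hu⟩ =>
      hu ▸ prod_nonneg fun i _ => scaledSliceSum_nonneg hA hx i
  calc sInf (sliceProducts m n A g x) ^ ((g : ℝ)⁻¹) ≤ (lam ^ g) ^ ((g : ℝ)⁻¹) :=
        rpow_le_rpow hInf
          ((csInf_le (sliceProducts_finite g x).bddBelow ⟨s, hs, rfl⟩).trans hprod)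
          (by positivity)
    _ = lam := pow_rpow_inv_natCast hlam.le hg0.ne'

end CollatzWielandt

theorem stmt15 (m n : ℕ) (hm : 2 ≤ m) (hn : 0 < n)
    (A : Fin n → (Fin (m - 1) → Fin n) → ℝ) (hA : ∀ i t, 0 ≤ A i t)
    (hirr : StronglyConnected (tArc m n A))
    (g : ℕ) (hg : IsLeast {p : ℕ | ∃ γ : ℕ → Fin n, IsCircuit (tArc m n A) p γ} g) :
    specRad m n A = sInf {r : ℝ | ∃ x : Fin n → ℝ, (∀ i, 0 < x i) ∧
        r = (sSup {s : ℝ | ∃ u : Finset (Fin n), u.card = g ∧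
              s = ∏ i ∈ u, Ax m n A x i / x i ^ (m - 1)}) ^ ((g : ℝ)⁻¹)} ∧
    specRad m n A = sSup {r : ℝ | ∃ x : Fin n → ℝ, (∀ i, 0 < x i) ∧
        r = (sInf {s : ℝ | ∃ u : Finset (Fin n), u.card = g ∧
              s = ∏ i ∈ u, Ax m n A x i / x i ^ (m - 1)}) ^ ((g : ℝ)⁻¹)} := by
  have : NeZero n := ⟨hn.ne'⟩
  obtain ⟨γ, hg0, -, hγ⟩ := hg.1
  have hrow : ∀ i, ∃ j, tArc m n A i j := hirr.exists_arc (hγ 0 hg0)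
  obtain ⟨v, lam, hv, hlam, heig⟩ := exists_pos_eigenvector hm hA hirr hrow
  rw [specRad_eq hA hv hlam.le heig]
  exact ⟨(isLeast_rpow_sSup_sliceProducts hA hrow hg0 hg.2 hv hlam heig).csInf_eq.symm,
    (isGreatest_rpow_sInf_sliceProducts hA hrow hg0 hg.2 hv hlam heig).csSup_eq.symm⟩
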